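/- The cycle type map from conjugacy classes of the hyperoctahedral group W_n (viewed inside S_{2n}) to partitions of 2n with all odd parts of even multiplicity is surjective. -/

import Mathlib

/-- The fixed-point-free involution `τ = (1 1')(2 2')⋯(n n')` on the `2n`-element set
`Fin n × Bool`. -/
def tauInv (n : ℕ) : Equiv.Perm (Fin n × Bool) :=
  Equiv.prodCongr (Equiv.refl (Fin n)) ⟨Bool.not, Bool.not, Bool.not_not, Bool.not_not⟩

open Equiv Equiv.Perm

lemma tauInv_apply (n : ℕ) (x : Fin n × Bool) : tauInv n x = (x.1, !x.2) := rfl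

/-- `Equiv.permCongr` as a monoid hom. -/
def permCongrHom {α β : Type*} (e : α ≃ β) : Perm α →* Perm β where
  toFun := e.permCongr
  map_one' := by ext x; simp
  map_mul' p q := by ext x; simp [Perm.mul_apply]

@[simp] lemma permCongrHom_apply {α β : Type*} (e : α ≃ β) (p : Perm α) (x : β) :
    _root_.permCongrHom e p x = e (p (e.symm x)) := rfl

section
variable {α β : Type*} [Fintype α] [DecidableEq α] [Fintype β] [DecidableEq β]
set_option linter.unusedSectionVars false

lemma cycleType_monoidHom (F : Perm α →* Perm β)
    (hc : ∀ σ : Perm α, σ.IsCycle → (F σ).IsCycle)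
    (hs : ∀ σ : Perm α, (F σ).support.card = σ.support.card)
    (hd : ∀ σ τ : Perm α, Perm.Disjoint σ τ → Perm.Disjoint (F σ) (F τ)) (σ : Perm α) :
    (F σ).cycleType = σ.cycleType := by
  induction σ using cycle_induction_on with
  | base_one => rw [map_one, cycleType_one, cycleType_one]
  | base_cycles σ hσ => rw [(hc σ hσ).cycleType, hσ.cycleType, hs]
  | induction_disjoint σ τ h hσc hσ hτ =>
    rw [map_mul, Equiv.Perm.Disjoint.cycleType_mul (hd σ τ h), Equiv.Perm.Disjoint.cycleType_mul h, hσ, hτ]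

lemma isCycle_permCongr (e : α ≃ β) {σ : Perm α} (h : σ.IsCycle) :
    (e.permCongr σ).IsCycle := by
  obtain ⟨x, hx, hsc⟩ := h
  refine ⟨e x, by simp [hx], fun y hy => ?_⟩
  obtain ⟨i, hi⟩ := hsc (y := e.symm y) (fun hh => hy (by simp only [permCongr_apply, hh]; simp))
  refine ⟨i, ?_⟩
  have h2 : (e.permCongr σ) ^ i = e.permCongr (σ ^ i) := (map_zpow (_root_.permCongrHom e) σ i).symm
  rw [h2]; simp [hi]

lemma support_permCongr (e : α ≃ β) (σ : Perm α) :
    (e.permCongr σ).support = σ.support.map e.toEmbedding := by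
  ext x
  simp only [Perm.mem_support, Finset.mem_map, Perm.mem_support, Equiv.coe_toEmbedding,
    permCongr_apply]
  constructor
  · intro h; exact ⟨e.symm x, fun hh => h (by rw [hh]; simp), by simp⟩
  · rintro ⟨y, hy, rfl⟩; simpa using fun hh => hy (e.injective hh)

lemma disjoint_permCongr (e : α ≃ β) {σ τ : Perm α} (h : Perm.Disjoint σ τ) :
    Perm.Disjoint (e.permCongr σ) (e.permCongr τ) := by
  intro x
  rcases h (e.symm x) with h' | h' <;> [left; right] <;> simp [h']

lemma cycleType_permCongr (e : α ≃ β) (σ : Perm α) :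
    (e.permCongr σ).cycleType = σ.cycleType := by
  refine cycleType_monoidHom (permCongrHom e) (fun σ h => isCycle_permCongr e h)
    (fun σ => ?_) (fun σ τ h => disjoint_permCongr e h) σ
  rw [show (_root_.permCongrHom e σ) = e.permCongr σ from rfl, support_permCongr, Finset.card_map]

/-- left inclusion -/
def sumLeftHom : Perm α →* Perm (α ⊕ β) :=
  (Perm.sumCongrHom α β).comp (MonoidHom.inl (Perm α) (Perm β))

@[simp] lemma sumLeftHom_apply (p : Perm α) : (sumLeftHom (β := β) p) = Perm.sumCongr p 1 := rfl

/-- right inclusion -/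
def sumRightHom : Perm β →* Perm (α ⊕ β) :=
  (Perm.sumCongrHom α β).comp (MonoidHom.inr (Perm α) (Perm β))

@[simp] lemma sumRightHom_apply (q : Perm β) : (sumRightHom (α := α) q) = Perm.sumCongr 1 q := rfl

lemma support_sumCongr_left (p : Perm α) :
    (Perm.sumCongr p (1 : Perm β)).support = p.support.map ⟨Sum.inl, Sum.inl_injective⟩ := by
  ext x; cases x <;> simp [Perm.mem_support]

lemma support_sumCongr_right (q : Perm β) :
    (Perm.sumCongr (1 : Perm α) q).support = q.support.map ⟨Sum.inr, Sum.inr_injective⟩ := by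
  ext x; cases x <;> simp [Perm.mem_support]

lemma isCycle_sumCongr_left {p : Perm α} (h : p.IsCycle) :
    (Perm.sumCongr p (1 : Perm β)).IsCycle := by
  obtain ⟨x, hx, hsc⟩ := h
  refine ⟨Sum.inl x, by simp [hx], fun y hy => ?_⟩
  cases y with
  | inl a =>
    obtain ⟨i, hi⟩ := hsc (y := a) (by simpa using hy)
    refine ⟨i, ?_⟩
    have h2 : (Perm.sumCongr p (1 : Perm β)) ^ i = Perm.sumCongr (p ^ i) 1 := by
      rw [← sumLeftHom_apply, ← map_zpow]; simp
    rw [h2]; simp [hi]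
  | inr b => simp at hy

lemma isCycle_sumCongr_right {q : Perm β} (h : q.IsCycle) :
    (Perm.sumCongr (1 : Perm α) q).IsCycle := by
  obtain ⟨x, hx, hsc⟩ := h
  refine ⟨Sum.inr x, by simp [hx], fun y hy => ?_⟩
  cases y with
  | inr a =>
    obtain ⟨i, hi⟩ := hsc (y := a) (by simpa using hy)
    refine ⟨i, ?_⟩
    have h2 : (Perm.sumCongr (1 : Perm α) q) ^ i = Perm.sumCongr 1 (q ^ i) := by
      rw [← sumRightHom_apply, ← map_zpow]; simp
    rw [h2]; simp [hi]
  | inl b => simp at hy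

lemma cycleType_sumCongr_left (p : Perm α) :
    (Perm.sumCongr p (1 : Perm β)).cycleType = p.cycleType := by
  refine cycleType_monoidHom sumLeftHom (fun σ h => by simpa using isCycle_sumCongr_left h)
    (fun σ => ?_) (fun σ τ h => ?_) p
  · rw [sumLeftHom_apply, support_sumCongr_left, Finset.card_map]
  · intro x; cases x with
    | inl a => rcases h a with h' | h' <;> [left; right] <;> simp [h']
    | inr b => left; simp

lemma cycleType_sumCongr_right (q : Perm β) :
    (Perm.sumCongr (1 : Perm α) q).cycleType = q.cycleType := by
  refine cycleType_monoidHom sumRightHom (fun σ h => by simpa using isCycle_sumCongr_right h)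
    (fun σ => ?_) (fun σ τ h => ?_) q
  · rw [sumRightHom_apply, support_sumCongr_right, Finset.card_map]
  · intro x; cases x with
    | inr a => rcases h a with h' | h' <;> [left; right] <;> simp [h']
    | inl b => left; simp

lemma cycleType_sumCongr (p : Perm α) (q : Perm β) :
    (Perm.sumCongr p q).cycleType = p.cycleType + q.cycleType := by
  have h1 : Perm.sumCongr p q = Perm.sumCongr p 1 * Perm.sumCongr 1 q := by
    ext x; cases x <;> simp
  have hd : Perm.Disjoint (Perm.sumCongr p (1 : Perm β)) (Perm.sumCongr (1 : Perm α) q) := by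
    intro x; cases x with
    | inl a => right; simp
    | inr b => left; simp
  rw [h1, Equiv.Perm.Disjoint.cycleType_mul hd, cycleType_sumCongr_left, cycleType_sumCongr_right]

end

/-- the pairing equivalence `Fin (m+1) ≃ Fin k × Bool` when `m + 1 = 2 * k`. -/
def pairEquiv (k m : ℕ) (h : m + 1 = 2 * k) : Fin (m + 1) ≃ Fin k × Bool where
  toFun x := (⟨x.val % k, Nat.mod_lt _ (by omega)⟩, decide (k ≤ x.val))
  invFun y := ⟨y.1.val + cond y.2 k 0, by rcases y with ⟨⟨i, hi⟩, b⟩; cases b <;> simp <;> omega⟩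
  left_inv x := by
    rcases x with ⟨x, hx⟩
    apply Fin.ext
    show x % k + cond (decide (k ≤ x)) k 0 = x
    by_cases hk : k ≤ x
    · have h1 : x % k = x - k := by
        rw [Nat.mod_eq_sub_mod hk, Nat.mod_eq_of_lt (by omega)]
      rw [h1, decide_eq_true hk]; show x - k + k = x; omega
    · rw [Nat.mod_eq_of_lt (by omega), decide_eq_false hk]; rfl
  right_inv y := by
    rcases y with ⟨⟨i, hi⟩, b⟩
    cases b
    · show ((⟨(i + 0) % k, _⟩, decide (k ≤ i + 0)) : Fin k × Bool) = _
      rw [Prod.mk.injEq]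
      refine ⟨Fin.ext ?_, ?_⟩
      · show (i + 0) % k = i; rw [Nat.add_zero, Nat.mod_eq_of_lt hi]
      · rw [decide_eq_false (by omega)]
    · show ((⟨(i + k) % k, _⟩, decide (k ≤ i + k)) : Fin k × Bool) = _
      rw [Prod.mk.injEq]
      refine ⟨Fin.ext ?_, ?_⟩
      · show (i + k) % k = i; rw [Nat.add_mod_right, Nat.mod_eq_of_lt hi]
      · rw [decide_eq_true (by omega : k ≤ i + k)]

lemma pairEquiv_key (k m : ℕ) (h : m + 1 = 2 * k) (x : Fin (m + 1)) :
    pairEquiv k m h (x + ⟨k, by omega⟩) = tauInv k (pairEquiv k m h x) := by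
  rcases x with ⟨x, hx⟩
  rw [tauInv_apply]
  show ((⟨((x + k) % (m + 1)) % k, _⟩, decide (k ≤ (x + k) % (m + 1))) : Fin k × Bool)
      = (⟨x % k, _⟩, !decide (k ≤ x))
  by_cases hk : k ≤ x
  · have h1 : (x + k) % (m + 1) = x - k := by
      have h2 : x + k - (m + 1) = x - k := by omega
      rw [Nat.mod_eq_sub_mod (by omega), h2, Nat.mod_eq_of_lt (by omega)]
    have h2 : x % k = x - k := by
      rw [Nat.mod_eq_sub_mod hk, Nat.mod_eq_of_lt (by omega)]
    rw [Prod.mk.injEq]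
    refine ⟨Fin.ext ?_, ?_⟩
    · show ((x + k) % (m + 1)) % k = x % k
      rw [h1, h2, Nat.mod_eq_of_lt (by omega)]
    · rw [h1, decide_eq_false (by omega : ¬ k ≤ x - k), decide_eq_true hk]; rfl
  · have h1 : (x + k) % (m + 1) = x + k := Nat.mod_eq_of_lt (by omega)
    rw [Prod.mk.injEq]
    refine ⟨Fin.ext ?_, ?_⟩
    · show ((x + k) % (m + 1)) % k = x % k
      rw [h1, Nat.add_mod_right]
    · rw [h1, decide_eq_true (by omega : k ≤ x + k), decide_eq_false hk]; rfl

/-- Block A : a single cycle of even length `2k` commuting with `τ`. -/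
lemma blockA (k : ℕ) (hk : 1 ≤ k) :
    ∃ c : Perm (Fin k × Bool), Commute c (tauInv k) ∧ c.cycleType = {2 * k} := by
  obtain ⟨m, hm⟩ : ∃ m, m + 1 = 2 * k := ⟨2 * k - 1, by omega⟩
  have htau : tauInv k =
      (pairEquiv k m hm).permCongr (Equiv.addRight (⟨k, by omega⟩ : Fin (m + 1))) := by
    apply Equiv.ext; intro y
    have h := pairEquiv_key k m hm ((pairEquiv k m hm).symm y)
    rw [Equiv.apply_symm_apply] at h
    rw [permCongr_apply, coe_addRight, h]
  refine ⟨(pairEquiv k m hm).permCongr (finRotate (m + 1)), ?_, ?_⟩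
  · rw [htau]
    have hcomm : Commute (finRotate (m + 1)) (Equiv.addRight (⟨k, by omega⟩ : Fin (m + 1))) := by
      apply Equiv.ext; intro x
      show finRotate (m + 1) (x + ⟨k, by omega⟩) = finRotate (m + 1) x + ⟨k, by omega⟩
      rw [finRotate_succ_apply, finRotate_succ_apply, add_right_comm]
    exact (hcomm.map (_root_.permCongrHom (pairEquiv k m hm)) : _)
  · rw [cycleType_permCongr, cycleType_finRotate_of_le (by omega), hm]

/-- equivalence splitting pairs into two copies -/
def boolSplit (a : ℕ) : Fin a × Bool ≃ Fin a ⊕ Fin a where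
  toFun x := cond x.2 (Sum.inl x.1) (Sum.inr x.1)
  invFun := Sum.elim (fun i => (i, true)) (fun i => (i, false))
  left_inv := by rintro ⟨i, b⟩; cases b <;> rfl
  right_inv := by rintro (i | i) <;> rfl

/-- Block B : two cycles of equal length `a ≥ 2`, swapped by `τ`. -/
lemma blockB (a : ℕ) (ha : 2 ≤ a) :
    ∃ c : Perm (Fin a × Bool), Commute c (tauInv a) ∧ c.cycleType = {a, a} := by
  refine ⟨Equiv.prodCongr (finRotate a) (Equiv.refl Bool), Equiv.ext fun x => rfl, ?_⟩
  have h1 : (boolSplit a).permCongr (Equiv.prodCongr (finRotate a) (Equiv.refl Bool)) =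
      Perm.sumCongr (finRotate a) (finRotate a) := by
    apply Equiv.ext; rintro (x | x) <;> rfl
  rw [← cycleType_permCongr (boolSplit a), h1, cycleType_sumCongr,
    cycleType_finRotate_of_le ha]
  rfl

/-- the splitting equivalence for combining blocks -/
def splitEquiv (k m : ℕ) : Fin (k + m) × Bool ≃ (Fin k × Bool) ⊕ (Fin m × Bool) :=
  (Equiv.prodCongr finSumFinEquiv.symm (Equiv.refl Bool)).trans (Equiv.sumProdDistrib _ _ _)

lemma splitEquiv_tau (k m : ℕ) :
    (splitEquiv k m).symm.permCongr (Perm.sumCongr (tauInv k) (tauInv m)) = tauInv (k + m) := by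
  apply Equiv.ext; rintro ⟨i, b⟩
  rw [permCongr_apply, symm_symm, tauInv_apply]
  rcases h : finSumFinEquiv.symm i with a | c
  · have hi : finSumFinEquiv (Sum.inl a) = i := by rw [← h, Equiv.apply_symm_apply]
    simp [splitEquiv, h, tauInv_apply, hi]
  · have hi : finSumFinEquiv (Sum.inr c) = i := by rw [← h, Equiv.apply_symm_apply]
    simp [splitEquiv, h, tauInv_apply, hi]

lemma combine {k m : ℕ} (w1 : Perm (Fin k × Bool)) (w2 : Perm (Fin m × Bool))
    (h1 : Commute w1 (tauInv k)) (h2 : Commute w2 (tauInv m)) :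
    ∃ w : Perm (Fin (k + m) × Bool), Commute w (tauInv (k + m)) ∧
      w.cycleType = w1.cycleType + w2.cycleType := by
  have hmul : ∀ (a c : Perm (Fin k × Bool)) (b d : Perm (Fin m × Bool)),
      Perm.sumCongr a b * Perm.sumCongr c d = Perm.sumCongr (a * c) (b * d) := by
    intro a c b d; ext x; cases x <;> simp [Perm.mul_apply]
  refine ⟨(splitEquiv k m).symm.permCongr (Perm.sumCongr w1 w2), ?_, ?_⟩
  · rw [← splitEquiv_tau k m]
    have hc : Commute (Perm.sumCongr w1 w2) (Perm.sumCongr (tauInv k) (tauInv m)) := by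
      show _ = _
      rw [hmul, hmul, h1.eq, h2.eq]
    exact (hc.map (_root_.permCongrHom (splitEquiv k m).symm) : _)
  · rw [cycleType_permCongr, cycleType_sumCongr]

/-- The main existence lemma, by strong induction on the multiset of parts. -/
lemma mainLemma (s : Multiset ℕ) : ∀ n : ℕ, s.sum = 2 * n → (∀ x ∈ s, x ≠ 0) →
    (∀ i, Odd i → Even (s.count i)) →
    ∃ w : Perm (Fin n × Bool), Commute w (tauInv n) ∧
      w.cycleType = s.filter (fun x => 2 ≤ x) := by
  induction s using Multiset.strongInductionOn with
  | ih s ih =>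
  intro n hsum h0 hodd
  rcases Multiset.empty_or_exists_mem s with rfl | ⟨a, ha⟩
  · have hn : n = 0 := by simp at hsum; omega
    subst hn
    exact ⟨1, Commute.one_left _, by simp⟩
  rcases Nat.even_or_odd a with he | ho
  · -- even part a = 2k : one block of a single 2k-cycle
    obtain ⟨k, rfl⟩ := he
    have hk : 1 ≤ k := by have := h0 _ ha; omega
    obtain ⟨t, rfl⟩ : ∃ t, s = (k + k) ::ₘ t := ⟨s.erase (k + k), (Multiset.cons_erase ha).symm⟩
    rw [Multiset.sum_cons] at hsum
    obtain ⟨m, rfl⟩ : ∃ m, n = k + m := ⟨n - k, by omega⟩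
    obtain ⟨w2, hw2c, hw2t⟩ := ih t (Multiset.lt_cons_self _ _) m (by omega)
      (fun x hx => h0 x (Multiset.mem_cons_of_mem hx))
      (fun i hi => by
        have hne : i ≠ k + k := by rintro rfl; rw [Nat.odd_iff] at hi; omega
        have h2 := hodd i hi
        rwa [Multiset.count_cons_of_ne hne] at h2)
    obtain ⟨w1, hw1c, hw1t⟩ := blockA k hk
    obtain ⟨w, hwc, hwt⟩ := combine w1 w2 hw1c hw2c
    refine ⟨w, hwc, ?_⟩
    rw [hwt, hw1t, hw2t, Multiset.filter_cons_of_pos _ (show (2:ℕ) ≤ k + k by omega),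
      two_mul, Multiset.singleton_add]
  · -- odd part a : remove two copies of a
    have hc2 : 2 ≤ s.count a := by
      obtain ⟨c, hc⟩ := hodd a ho
      have h1 : 1 ≤ s.count a := Multiset.one_le_count_iff_mem.2 ha
      omega
    have ha2 : a ∈ s.erase a := by
      rw [← Multiset.one_le_count_iff_mem, Multiset.count_erase_self]
      omega
    obtain ⟨t, rfl⟩ : ∃ t, s = a ::ₘ a ::ₘ t :=
      ⟨(s.erase a).erase a, by rw [Multiset.cons_erase ha2, Multiset.cons_erase ha]⟩
    rw [Multiset.sum_cons, Multiset.sum_cons] at hsum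
    have h0a : a ≠ 0 := h0 a ha
    obtain ⟨m, rfl⟩ : ∃ m, n = a + m := ⟨n - a, by omega⟩
    obtain ⟨w2, hw2c, hw2t⟩ := ih t
      (lt_of_le_of_lt (Multiset.le_cons_self t a) (Multiset.lt_cons_self _ _)) m (by omega)
      (fun x hx => h0 x (Multiset.mem_cons_of_mem (Multiset.mem_cons_of_mem hx)))
      (fun i hi => by
        by_cases hia : i = a
        · subst hia
          have h2 := hodd i hi
          rw [Multiset.count_cons_self, Multiset.count_cons_self] at h2
          obtain ⟨c, hc⟩ := h2
          exact ⟨c - 1, by omega⟩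
        · have h2 := hodd i hi
          rwa [Multiset.count_cons_of_ne hia, Multiset.count_cons_of_ne hia] at h2)
    rcases eq_or_lt_of_le (show 1 ≤ a by omega) with ha1 | ha2'
    · -- a = 1 : the block is the identity on one pair
      obtain rfl : a = 1 := ha1.symm
      obtain ⟨w, hwc, hwt⟩ := combine (1 : Perm (Fin 1 × Bool)) w2 (Commute.one_left _) hw2c
      refine ⟨w, hwc, ?_⟩
      rw [hwt, cycleType_one, hw2t,
        Multiset.filter_cons_of_neg _ (show ¬ (2:ℕ) ≤ 1 by omega),
        Multiset.filter_cons_of_neg _ (show ¬ (2:ℕ) ≤ 1 by omega), zero_add]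
    · -- a ≥ 2 : block of two a-cycles swapped by τ
      obtain ⟨w1, hw1c, hw1t⟩ := blockB a ha2'
      obtain ⟨w, hwc, hwt⟩ := combine w1 w2 hw1c hw2c
      refine ⟨w, hwc, ?_⟩
      rw [hwt, hw1t, hw2t, Multiset.filter_cons_of_pos _ (show (2:ℕ) ≤ a by omega),
        Multiset.filter_cons_of_pos _ (show (2:ℕ) ≤ a by omega),
        show ({a, a} : Multiset ℕ) = a ::ₘ a ::ₘ 0 from rfl, Multiset.cons_add,
        Multiset.cons_add, zero_add]

/-- The cycle-type map from the hyperoctahedral group `Wₙ ⊂ S_{2n}` (the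
centralizer of the fixed-point-free involution `τ`) to partitions of `2n` in which every odd
part occurs an even number of times is surjective: every such partition is realized as the
cycle type of some `w ∈ Wₙ`. -/
theorem stmt14 (n : ℕ) (p : (Fintype.card (Fin n × Bool)).Partition)
    (hp : ∀ i, Odd i → Even (p.parts.count i)) :
    ∃ w ∈ Subgroup.centralizer {tauInv n}, Equiv.Perm.partition w = p := by
  have hcard : Fintype.card (Fin n × Bool) = 2 * n := by
    simp [Fintype.card_prod, mul_comm]
  obtain ⟨w, hwc, hwt⟩ := mainLemma p.parts n (by rw [p.parts_sum, hcard])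
    (fun x hx => (p.parts_pos hx).ne') hp
  refine ⟨w, ?_, ?_⟩
  · rw [Subgroup.mem_centralizer_iff]
    rintro g hg
    rw [Set.mem_singleton_iff] at hg
    subst hg
    exact hwc.symm.eq
  · have hones : p.parts.filter (fun x => ¬ 2 ≤ x) =
        Multiset.replicate (Multiset.card (p.parts.filter (fun x => ¬ 2 ≤ x))) 1 := by
      refine Multiset.eq_replicate_card.mpr fun b hb => ?_
      have h1 := p.parts_pos (Multiset.mem_of_mem_filter hb)
      have h2 := Multiset.of_mem_filter hb
      omega
    have hsplit : p.parts.filter (fun x => 2 ≤ x) + p.parts.filter (fun x => ¬ 2 ≤ x)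
        = p.parts := Multiset.filter_add_not _ _
    have hsum2 : (p.parts.filter (fun x => 2 ≤ x)).sum
        + (p.parts.filter (fun x => ¬ 2 ≤ x)).sum = 2 * n := by
      rw [← Multiset.sum_add, hsplit, p.parts_sum, hcard]
    have hones_sum : (p.parts.filter (fun x => ¬ 2 ≤ x)).sum
        = Multiset.card (p.parts.filter (fun x => ¬ 2 ≤ x)) := by
      conv_lhs => rw [hones]
      rw [Multiset.sum_replicate, smul_eq_mul, mul_one]
    have hsupp : w.support.card = (p.parts.filter (fun x => 2 ≤ x)).sum := by
      rw [← Equiv.Perm.sum_cycleType, hwt]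
    have hrep : Multiset.replicate (Fintype.card (Fin n × Bool) - w.support.card) 1
        = Multiset.replicate (Multiset.card (p.parts.filter (fun x => ¬ 2 ≤ x))) 1 := by
      congr 1
      omega
    apply Nat.Partition.ext
    rw [Equiv.Perm.parts_partition, hwt, hrep, ← hones, hsplit]
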